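/- arXiv:0902.1763 — 9 statements merged into one kernel-verified Lean document; each statement's English description precedes it below -/
import Mathlib

section
/- If B is causally between A and C (Reichenbach's conditions hold for the triple (A,B,C)), then A is not causally between C and B; that is, the triple (C,A,B) fails the conditions. -/
/-- Probability of an event (finset) w.r.t. a weight function `p`. -/
def Pr {S : Type*} (p : S → ℝ) (A : Finset S) : ℝ := ∑ s ∈ A, p s

/-- Reichenbach's causal betweenness: `B` is causally between `A` and `C`.
Conditional probabilities `P(X|Y)` are interpreted as the ratios `P(X∩Y)/P(Y)`. -/
def CausallyBetween {S : Type*} [DecidableEq S] (p : S → ℝ) (A B C : Finset S) : Prop :=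
  Pr p (A ∩ C) > Pr p A * Pr p C ∧
  Pr p (C ∩ B) / Pr p B > Pr p (C ∩ A) / Pr p A ∧
  Pr p (A ∩ B) / Pr p B > Pr p (A ∩ C) / Pr p C ∧
  Pr p (A ∩ C ∩ B) / Pr p B = (Pr p (A ∩ B) / Pr p B) * (Pr p (C ∩ B) / Pr p B) ∧
  Pr p (B \ A) > 0 ∧ Pr p (B \ C) > 0

theorem stmt_2_general {S : Type*} [DecidableEq S] (p : S → ℝ)
    (A B C : Finset S) (h : CausallyBetween p A B C) :
    ¬ CausallyBetween p C A B :=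
  -- `P(C|B) > P(C|A)` is condition (2) for `(A, B, C)`; condition (3) for `(C, A, B)` is the reverse.
  fun h' => lt_asymm h.2.1 h'.2.2.1

theorem stmt_2 {S : Type*} [Fintype S] [DecidableEq S] (p : S → ℝ)
    (hp : ∀ s, 0 ≤ p s) (hsum : ∑ s, p s = 1)
    (A B C : Finset S) (h : CausallyBetween p A B C) :
    ¬ CausallyBetween p C A B :=
  stmt_2_general p A B C h
end

section
/- For any set X of events in a finite probability space, the relation of Reichenbach causal betweenness CB(X) (the set of triples (A,B,C) of events in X with B causally between A and C) is a betweenness: every triple in it has pairwise distinct entries, it is closed under reversal (A,B,C)↦(C,B,A), and (A,B,C) ∈ CB(X) implies (C,A,B) ∉ CB(X). -/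
section Pr

variable {S : Type*} {p : S → ℝ}

lemma Pr_nonneg (hp : ∀ s, 0 ≤ p s) (A : Finset S) : 0 ≤ Pr p A :=
  Finset.sum_nonneg fun s _ => hp s

lemma Pr_mono (hp : ∀ s, 0 ≤ p s) {A B : Finset S} (h : A ⊆ B) : Pr p A ≤ Pr p B :=
  Finset.sum_le_sum_of_subset_of_nonneg h fun s _ _ => hp s

@[simp]
lemma Pr_empty : Pr p ∅ = 0 :=
  Finset.sum_empty

lemma Pr_inter_div_le_one [DecidableEq S] (hp : ∀ s, 0 ≤ p s) (A B : Finset S) :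
    Pr p (A ∩ B) / Pr p B ≤ 1 :=
  div_le_one_of_le₀ (Pr_mono hp Finset.inter_subset_right) (Pr_nonneg hp B)

end Pr

namespace CausallyBetween

variable {S : Type*} [DecidableEq S] {p : S → ℝ} {A B C : Finset S}

lemma left_ne_middle (h : CausallyBetween p A B C) : A ≠ B := by
  rintro rfl
  simpa using h.2.2.2.2.1

lemma middle_ne_right (h : CausallyBetween p A B C) : B ≠ C := by
  rintro rfl
  simpa using h.2.2.2.2.2

lemma left_ne_right (hp : ∀ s, 0 ≤ p s) (h : CausallyBetween p A B C) : A ≠ C := by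
  rintro rfl
  obtain ⟨hcorr, -, hcond, -⟩ := h
  rw [Finset.inter_self] at hcorr hcond
  have hA : 0 < Pr p A := (mul_self_nonneg _).trans_lt hcorr
  rw [div_self hA.ne'] at hcond
  exact (Pr_inter_div_le_one hp A B).not_gt hcond

lemma symm (h : CausallyBetween p A B C) : CausallyBetween p C B A := by
  obtain ⟨hcorr, hC, hA, hscreen, hBA, hBC⟩ := h
  refine ⟨?_, hA, hC, ?_, hBC, hBA⟩
  · rwa [Finset.inter_comm, mul_comm]
  · rw [Finset.inter_comm C A, hscreen, mul_comm]

lemma not_rotate (h : CausallyBetween p A B C) : ¬ CausallyBetween p C A B :=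
  fun h' => h.2.1.not_gt h'.2.2.1

end CausallyBetween

theorem stmt_6_general {S : Type*} [DecidableEq S] (p : S → ℝ)
    (hp : ∀ s, 0 ≤ p s)
    (X : Set (Finset S)) :
    ∀ A B C, A ∈ X → B ∈ X → C ∈ X → CausallyBetween p A B C →
      (A ≠ B ∧ B ≠ C ∧ A ≠ C) ∧ CausallyBetween p C B A ∧ ¬ CausallyBetween p C A B :=
  fun _ _ _ _ _ _ h =>
    ⟨⟨h.left_ne_middle, h.middle_ne_right, h.left_ne_right hp⟩, h.symm, h.not_rotate⟩

theorem stmt_6 {S : Type*} [Fintype S] [DecidableEq S] (p : S → ℝ)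
    (hp : ∀ s, 0 ≤ p s) (hsum : ∑ s, p s = 1)
    (X : Set (Finset S)) :
    ∀ A B C, A ∈ X → B ∈ X → C ∈ X → CausallyBetween p A B C →
      (A ≠ B ∧ B ≠ C ∧ A ≠ C) ∧ CausallyBetween p C B A ∧ ¬ CausallyBetween p C A B :=
  stmt_6_general p hp X
end

section
/- For any set X of events in a finite probability space, the directed graph G(CB(X)) — whose vertices are two-element subsets of X and whose edges go from {A,B} to {A,C} whenever (A,B,C) ∈ CB(X) — contains no directed cycle. -/
/-- A (finite) directed graph given by an edge relation `E` contains a directed cycle: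
a nonempty closed directed walk. -/
def HasDirectedCycle {V : Type*} (E : V → V → Prop) : Prop :=
  ∃ (n : ℕ) (f : ℕ → V), 0 < n ∧ (∀ i < n, E (f i) (f (i + 1))) ∧ f 0 = f n

/-! The dependence ratio `P(AB) / (P(A) P(B))` of an unordered pair `{A, B}` strictly decreases
along every edge of `G(CB(X))`: for `(A, B, C) ∈ CB(X)`, dividing `P(A|B) > P(A|C)` by `P(A) > 0`
gives `P(AB) / (P(A) P(B)) > P(AC) / (P(A) P(C))`. A real-valued function cannot strictly decrease
around a closed walk. -/

theorem not_hasDirectedCycle_of_strictAnti {V α : Type*} [Preorder α] {E : V → V → Prop}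
    (φ : V → α) (hφ : ∀ u v, E u v → φ v < φ u) : ¬ HasDirectedCycle E := by
  rintro ⟨n, f, hn, hE, hcycle⟩
  have hdecr : ∀ k < n, φ (f (k + 1)) < φ (f 0) := by
    intro k
    induction k with
    | zero => exact fun h0 => hφ _ _ (hE 0 h0)
    | succ k ih => exact fun hk => (hφ _ _ (hE _ hk)).trans (ih (by omega))
  have hlast := hdecr (n - 1) (by omega)
  rw [Nat.sub_add_cancel hn, ← hcycle] at hlast
  exact lt_irrefl _ hlast

section CausallyBetween

variable {S : Type*} {p : S → ℝ}

variable [DecidableEq S]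

variable (p) in
noncomputable def dependenceRatio : Sym2 (Finset S) → ℝ :=
  Sym2.lift ⟨fun A B => Pr p (A ∩ B) / (Pr p A * Pr p B), fun A B => by
    dsimp only
    rw [Finset.inter_comm, mul_comm]⟩

lemma CausallyBetween.Pr_left_pos (hp : ∀ s, 0 ≤ p s) {A B C : Finset S}
    (h : CausallyBetween p A B C) : 0 < Pr p A :=
  have hAC : 0 < Pr p (A ∩ C) :=
    (mul_nonneg (Pr_nonneg hp A) (Pr_nonneg hp C)).trans_lt h.1
  hAC.trans_le (Pr_mono hp Finset.inter_subset_left)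

lemma CausallyBetween.dependenceRatio_lt (hp : ∀ s, 0 ≤ p s) {A B C : Finset S}
    (h : CausallyBetween p A B C) : dependenceRatio p s(A, C) < dependenceRatio p s(A, B) := by
  simp only [dependenceRatio, Sym2.lift_mk, div_mul_eq_div_div_swap _ (Pr p A)]
  exact div_lt_div_of_pos_right h.2.2.1 (h.Pr_left_pos hp)

end CausallyBetween

theorem stmt_7_general {S : Type*} [DecidableEq S] (p : S → ℝ)
    (hp : ∀ s, 0 ≤ p s)
    (X : Set (Finset S)) :
    ¬ HasDirectedCycle (fun u v : Sym2 (Finset S) =>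
        ∃ A B C, A ∈ X ∧ B ∈ X ∧ C ∈ X ∧ CausallyBetween p A B C ∧
          u = s(A, B) ∧ v = s(A, C)) := by
  refine not_hasDirectedCycle_of_strictAnti (dependenceRatio p) ?_
  rintro _ _ ⟨A, B, C, -, -, -, hABC, rfl, rfl⟩
  exact hABC.dependenceRatio_lt hp

theorem stmt_7 {S : Type*} [Fintype S] [DecidableEq S] (p : S → ℝ)
    (hp : ∀ s, 0 ≤ p s) (hsum : ∑ s, p s = 1)
    (X : Set (Finset S)) :
    ¬ HasDirectedCycle (fun u v : Sym2 (Finset S) =>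
        ∃ A B C, A ∈ X ∧ B ∈ X ∧ C ∈ X ∧ CausallyBetween p A B C ∧
          u = s(A, B) ∧ v = s(A, C)) :=
  stmt_7_general p hp X
end

section
/- Let 𝓑 be a betweenness on a finite set satisfying the transitivity property: (A,B,C) ∈ 𝓑 and (A,D,B) ∈ 𝓑 imply (A,D,C) ∈ 𝓑. Define σ(A,B) as the number of elements D with (A,D,B) ∈ 𝓑. Then (A,B,C) ∈ 𝓑 implies σ(A,B) < σ(A,C). -/
/-- A ternary relation `B` is a betweenness. -/
def IsBetweenness {α : Type*} (B : α → α → α → Prop) : Prop :=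
  ∀ x y z, B x y z → (x ≠ y ∧ y ≠ z ∧ x ≠ z) ∧ B z y x ∧ ¬ B z x y

theorem IsBetweenness.not_between_right_self {α : Type*} {B : α → α → α → Prop}
    (hB : IsBetweenness B) (x y : α) : ¬ B x y y :=
  fun h => (hB x y y h).1.2.1 rfl

theorem stmt_8 {α : Type*} [Fintype α] (B : α → α → α → Prop)
    (hbet : IsBetweenness B)
    (htrans : ∀ A B' C D, B A B' C → B A D B' → B A D C) :
    ∀ A B' C, B A B' C →
      Set.ncard {D | B A D B'} < Set.ncard {D | B A D C} := by
  intro A B' C h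
  -- `B'` itself lies strictly between `A` and `C`, but not strictly between `A` and `B'`.
  have hssubset : {D | B A D B'} ⊂ {D | B A D C} :=
    ⟨fun D hD => htrans A B' C D h hD, fun hsub => hbet.not_between_right_self A B' (hsub h)⟩
  exact Set.ncard_lt_ncard hssubset
end

section
/- Let 𝓑 be a betweenness on a finite set with the property (A,B,C),(A,D,B) ∈ 𝓑 ⇒ (A,D,C) ∈ 𝓑. Then the directed graph G(𝓑), with vertices the two-element subsets of the ground set and edges ({A,B},{A,C}) for each (A,B,C) ∈ 𝓑, contains no directed cycle. -/
/-!
The number `σ{A, B}` of points strictly between `A` and `B` strictly increases along every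
edge `{A, B} → {A, C}`: by the hypothesis every point between `A` and `B` lies between `A` and
`C`, and `B` itself is a new one. A directed cycle would make `σ` increase back to its
starting value.
-/

theorem not_hasDirectedCycle_of_lt {V β : Type*} [Preorder β] {E : V → V → Prop} (σ : V → β)
    (hσ : ∀ u v, E u v → σ u < σ v) : ¬ HasDirectedCycle E := by
  rintro ⟨n, f, hn, hE, hclosed⟩
  have hlt : ∀ i, 0 < i → i ≤ n → σ (f 0) < σ (f i) := by
    intro i
    induction i with
    | zero => intro h; exact absurd h (lt_irrefl 0)
    | succ k ih =>
      intro _ hk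
      have hstep := hσ _ _ (hE k hk)
      rcases Nat.eq_zero_or_pos k with rfl | hpos
      · exact hstep
      · exact (ih hpos (Nat.le_of_succ_le hk)).trans hstep
  exact lt_irrefl _ (hclosed ▸ hlt n hn le_rfl)

namespace IsBetweenness

variable {α : Type*} {B : α → α → α → Prop}

def between (B : α → α → α → Prop) (x y : α) : Set α := {d | B x d y}

theorem between_comm (hB : IsBetweenness B) (x y : α) : between B x y = between B y x :=
  Set.ext fun d => ⟨fun h => (hB x d y h).2.1, fun h => (hB y d x h).2.1⟩

/-- The function `σ` of the paper. -/
noncomputable def betweenCount (hB : IsBetweenness B) : Sym2 α → ℕ :=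
  Sym2.lift ⟨fun x y => (between B x y).ncard, fun x y => by simp only [hB.between_comm x y]⟩

theorem between_ssubset_between (hB : IsBetweenness B)
    (htrans : ∀ A B' C D, B A B' C → B A D B' → B A D C) {x y z : α} (hxyz : B x y z) :
    between B x y ⊂ between B x z :=
  ⟨fun d hd => htrans x y z d hxyz hd,
    fun h => (hB x y y (h (show B x y z from hxyz))).1.2.1 rfl⟩

theorem betweenCount_lt [Finite α] (hB : IsBetweenness B)
    (htrans : ∀ A B' C D, B A B' C → B A D B' → B A D C) {x y z : α} (hxyz : B x y z) :
    hB.betweenCount s(x, y) < hB.betweenCount s(x, z) :=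
  Set.ncard_lt_ncard (hB.between_ssubset_between htrans hxyz)

end IsBetweenness

theorem stmt_9 {α : Type*} [Fintype α] (B : α → α → α → Prop)
    (hbet : IsBetweenness B)
    (htrans : ∀ A B' C D, B A B' C → B A D B' → B A D C) :
    ¬ HasDirectedCycle (fun u v : Sym2 α =>
        ∃ x y z, B x y z ∧ u = s(x, y) ∧ v = s(x, z)) := by
  refine not_hasDirectedCycle_of_lt hbet.betweenCount ?_
  rintro _ _ ⟨x, y, z, hxyz, rfl, rfl⟩
  exact hbet.betweenCount_lt htrans hxyz
end

section
/- Every totally orderable betweenness on a finite set has an acyclic associated directed graph: if there is a real-valued map t with (A,B,C)∈𝓑 implying t(A)<t(B)<t(C) or t(C)<t(B)<t(A), then the graph on two-element subsets with edges ({A,B},{A,C}) for (A,B,C)∈𝓑 contains no directed cycle. -/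
/-!
Under the order-preserving map `t`, a triple `(A, B, C)` of the betweenness has `t B` strictly
between `t A` and `t C`, so `|t A - t B| < |t A - t C|`. Hence the length `|t a - t b|` of a
pair `{a, b}` strictly increases along every edge of the graph, which rules out a directed cycle.
-/

theorem not_hasDirectedCycle_of_strictMono_potential {V β : Type*} [Preorder β]
    {E : V → V → Prop} (W : V → β) (hW : ∀ u v, E u v → W u < W v) :
    ¬ HasDirectedCycle E := by
  rintro ⟨n, f, hn, hE, hclosed⟩
  have increasing : ∀ i < n, W (f 0) < W (f (i + 1)) := by
    intro i hi
    induction i with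
    | zero => exact hW _ _ (hE 0 hi)
    | succ k ih => exact (ih (by omega)).trans (hW _ _ (hE (k + 1) hi))
  obtain ⟨m, rfl⟩ := Nat.exists_eq_succ_of_ne_zero hn.ne'
  exact (increasing m m.lt_succ_self).ne (congrArg W hclosed)

theorem abs_sub_lt_abs_sub_of_between {G : Type*} [AddCommGroup G] [LinearOrder G]
    [IsOrderedAddMonoid G] {a b c : G} (h : (a < b ∧ b < c) ∨ (c < b ∧ b < a)) :
    |a - b| < |a - c| := by
  rcases h with ⟨hab, hbc⟩ | ⟨hcb, hba⟩
  · rw [abs_sub_comm a b, abs_sub_comm a c, abs_of_pos (sub_pos.2 hab),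
      abs_of_pos (sub_pos.2 (hab.trans hbc))]
    exact sub_lt_sub_right hbc a
  · rw [abs_of_pos (sub_pos.2 hba), abs_of_pos (sub_pos.2 (hcb.trans hba))]
    exact sub_lt_sub_left hcb a

def Sym2.distUnder {α : Type*} (t : α → ℝ) : Sym2 α → ℝ :=
  Sym2.lift ⟨fun a b => |t a - t b|, fun a b => abs_sub_comm (t a) (t b)⟩

theorem stmt_11_general {α : Type*} (B : α → α → α → Prop)
    (t : α → ℝ)
    (ht : ∀ x y z, B x y z → (t x < t y ∧ t y < t z) ∨ (t z < t y ∧ t y < t x)) :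
    ¬ HasDirectedCycle (fun u v : Sym2 α =>
        ∃ x y z, B x y z ∧ u = s(x, y) ∧ v = s(x, z)) := by
  refine not_hasDirectedCycle_of_strictMono_potential (Sym2.distUnder t) ?_
  rintro _ _ ⟨x, y, z, hB, rfl, rfl⟩
  exact abs_sub_lt_abs_sub_of_between (ht x y z hB)

theorem stmt_11 {α : Type*} [Fintype α] (B : α → α → α → Prop)
    (hbet : IsBetweenness B) (t : α → ℝ)
    (ht : ∀ x y z, B x y z → (t x < t y ∧ t y < t z) ∨ (t z < t y ∧ t y < t x)) :
    ¬ HasDirectedCycle (fun u v : Sym2 α =>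
        ∃ x y z, B x y z ∧ u = s(x, y) ∧ v = s(x, z)) :=
  stmt_11_general B t ht
end

section
/- The six-triple relation consisting of (A1,A2,A3), (A1,A2,A4), (A4,A2,A3) and their reversals (A3,A2,A1), (A4,A2,A1), (A3,A2,A4) on the four-element set {A1,A2,A3,A4} is a betweenness whose associated directed graph contains no directed cycle, but it is not totally orderable. -/
/-- Reichenbach's example: the six triples (A1,A2,A3), (A1,A2,A4), (A4,A2,A3)
and their reversals, on the four-element set {A1,A2,A3,A4} = {0,1,2,3}. -/
def ReichenbachRel (x y z : Fin 4) : Prop :=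
  (x, y, z) ∈ ({(0,1,2), (0,1,3), (3,1,2), (2,1,0), (3,1,0), (2,1,3)} :
    Set (Fin 4 × Fin 4 × Fin 4))

/-! All six triples have middle point A2, so every edge of `G(𝓑)` leads from a pair containing A2
to a pair avoiding it, and no directed walk has two consecutive steps. Under a total ordering, A1
and A3 lie on opposite sides of A2, and so do A1 and A4; hence A3 and A4 lie on the same side,
contradicting the triple (A4, A2, A3). -/

/-- The graph `G(B)` of the paper. -/
def betweennessGraph {α : Type*} (B : α → α → α → Prop) (u v : Sym2 α) : Prop :=
  ∃ x y z, B x y z ∧ u = s(x, y) ∧ v = s(x, z)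

theorem not_hasDirectedCycle_of_forall_edge {V : Type*} {E : V → V → Prop} (P : V → Prop)
    (hE : ∀ u v, E u v → P u ∧ ¬ P v) : ¬ HasDirectedCycle E := by
  rintro ⟨n, f, hn, hwalk, hclosed⟩
  have hf1 : ¬ P (f 1) := (hE _ _ (hwalk 0 hn)).2
  rcases Nat.lt_or_ge 1 n with h1 | h1
  · exact hf1 (hE _ _ (hwalk 1 h1)).1
  · obtain rfl : n = 1 := le_antisymm h1 hn
    exact hf1 (hclosed ▸ (hE _ _ (hwalk 0 hn)).1)

theorem not_hasDirectedCycle_betweennessGraph_of_forall_middle_eq {α : Type*}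
    {B : α → α → α → Prop} (hB : IsBetweenness B) (m : α) (hm : ∀ x y z, B x y z → y = m) :
    ¬ HasDirectedCycle (betweennessGraph B) := by
  refine not_hasDirectedCycle_of_forall_edge (m ∈ ·) ?_
  rintro _ _ ⟨x, y, z, hxyz, rfl, rfl⟩
  obtain rfl := hm x y z hxyz
  obtain ⟨⟨hxy, hyz, -⟩, -, -⟩ := hB x y z hxyz
  simp [hxy.symm, hyz]

def StrictlyBetween {α : Type*} [Preorder α] (a b c : α) : Prop :=
  (a < b ∧ b < c) ∨ (c < b ∧ b < a)

theorem not_strictlyBetween_of_strictlyBetween {α : Type*} [LinearOrder α] {a b c d : α}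
    (habc : StrictlyBetween a b c) (habd : StrictlyBetween a b d) :
    ¬ StrictlyBetween d b c := by
  rintro (hdbc | hdbc) <;> rcases habc with habc | habc <;> rcases habd with habd | habd <;> order

theorem reichenbachRel_iff (x y z : Fin 4) : ReichenbachRel x y z ↔
    (x = 0 ∧ y = 1 ∧ z = 2) ∨ (x = 0 ∧ y = 1 ∧ z = 3) ∨ (x = 3 ∧ y = 1 ∧ z = 2) ∨
    (x = 2 ∧ y = 1 ∧ z = 0) ∨ (x = 3 ∧ y = 1 ∧ z = 0) ∨ (x = 2 ∧ y = 1 ∧ z = 3) := by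
  simp [ReichenbachRel, Prod.ext_iff]

theorem isBetweenness_reichenbachRel : IsBetweenness ReichenbachRel := by
  intro x y z h
  simp only [reichenbachRel_iff] at h ⊢
  rcases h with ⟨rfl, rfl, rfl⟩ | ⟨rfl, rfl, rfl⟩ | ⟨rfl, rfl, rfl⟩ | ⟨rfl, rfl, rfl⟩ |
    ⟨rfl, rfl, rfl⟩ | ⟨rfl, rfl, rfl⟩ <;> decide

theorem reichenbachRel_middle_eq_one {x y z : Fin 4} (h : ReichenbachRel x y z) : y = 1 := by
  rw [reichenbachRel_iff] at h
  omega

theorem stmt_16 :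
    IsBetweenness ReichenbachRel ∧
    ¬ HasDirectedCycle (fun u v : Sym2 (Fin 4) =>
        ∃ x y z, ReichenbachRel x y z ∧ u = s(x, y) ∧ v = s(x, z)) ∧
    ¬ ∃ (α : Type) (_ : LinearOrder α) (t : Fin 4 → α),
        ∀ x y z, ReichenbachRel x y z →
          (t x < t y ∧ t y < t z) ∨ (t z < t y ∧ t y < t x) := by
  refine ⟨isBetweenness_reichenbachRel,
    not_hasDirectedCycle_betweennessGraph_of_forall_middle_eq isBetweenness_reichenbachRel 1
      fun _ _ _ => reichenbachRel_middle_eq_one, ?_⟩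
  rintro ⟨α, _, t, ht⟩
  have hr : ∀ x y z, ReichenbachRel x y z → StrictlyBetween (t x) (t y) (t z) := ht
  exact not_strictlyBetween_of_strictlyBetween (hr 0 1 2 (by simp [reichenbachRel_iff]))
    (hr 0 1 3 (by simp [reichenbachRel_iff])) (hr 3 1 2 (by simp [reichenbachRel_iff]))
end

section
/- If B is causally between A and C, then P(AC|B) > P(AC); that is, B screens off A from C and conditioning on B increases the probability of the joint occurrence AC. -/
theorem stmt_18 {S : Type*} [Fintype S] [DecidableEq S] (p : S → ℝ)
    (hp : ∀ s, 0 ≤ p s) (hsum : ∑ s, p s = 1)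
    (A B C : Finset S) (h : CausallyBetween p A B C) :
    Pr p (A ∩ C ∩ B) / Pr p B > Pr p (A ∩ C) := by

  obtain ⟨h1, h2, h3, h4, h5, h6⟩ := h
  have hnn : ∀ X : Finset S, 0 ≤ Pr p X := fun X => Finset.sum_nonneg fun s _ => hp s
  have hmono : ∀ X Y : Finset S, X ⊆ Y → Pr p X ≤ Pr p Y := fun X Y hXY =>
    Finset.sum_le_sum_of_subset_of_nonneg hXY (fun s _ _ => hp s)
  have hAC : 0 < Pr p (A ∩ C) := lt_of_le_of_lt (mul_nonneg (hnn A) (hnn C)) h1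
  have hA : 0 < Pr p A := lt_of_lt_of_le hAC (hmono _ _ Finset.inter_subset_left)
  have hC : 0 < Pr p C := lt_of_lt_of_le hAC (hmono _ _ Finset.inter_subset_right)
  have hB : 0 < Pr p B := lt_of_lt_of_le h5 (hmono _ _ Finset.sdiff_subset)
  rw [gt_iff_lt, h4]
  have hCA : Pr p (C ∩ A) = Pr p (A ∩ C) := by rw [Finset.inter_comm]
  rw [hCA] at h2
  have step1 : (Pr p (A ∩ C) / Pr p C) * (Pr p (A ∩ C) / Pr p A) <
      (Pr p (A ∩ B) / Pr p B) * (Pr p (C ∩ B) / Pr p B) :=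
    mul_lt_mul'' h3 h2 (div_nonneg hAC.le hC.le) (div_nonneg hAC.le hA.le)
  have step2 : Pr p (A ∩ C) < Pr p (A ∩ C) / Pr p C * (Pr p (A ∩ C) / Pr p A) := by
    rw [div_mul_div_comm, lt_div_iff₀ (mul_pos hC hA)]
    nlinarith
  linarith
end

section
/- Any ternary relation 𝓑 on a finite set that is a betweenness and whose associated graph G(𝓑) is acyclic admits an injective-on-pairs weight function β from two-element subsets into an interval (1/4, 1/4+ε) such that (i,j,k) ∈ 𝓑 implies β({i,j}) > β({i,k}) and β({j,k}) > β({i,k}), for any prescribed ε > 0. -/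
section DirectedGraph

variable {V : Type*} {E : V → V → Prop}

lemma exists_walk_of_transGen {a b : V} (h : Relation.TransGen E a b) :
    ∃ (n : ℕ) (f : ℕ → V), 0 < n ∧ (∀ i < n, E (f i) (f (i + 1))) ∧
      f 0 = a ∧ f n = b := by
  induction h with
  | single hab =>
    refine ⟨1, fun i => if i = 0 then a else _, one_pos, fun i hi => ?_, rfl, rfl⟩
    obtain rfl : i = 0 := by omega
    simpa using hab
  | @tail b c _ hbc ih =>
    obtain ⟨n, f, hn, hf, rfl, rfl⟩ := ih
    refine ⟨n + 1, fun i => if i ≤ n then f i else c, n.succ_pos, fun i hi => ?_,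
      by simp, by simp⟩
    rcases Nat.lt_succ_iff_lt_or_eq.mp hi with hi | rfl
    · simpa [hi.le, Nat.succ_le_of_lt hi] using hf i hi
    · simpa using hbc

lemma hasDirectedCycle_of_transGen {a : V} (h : Relation.TransGen E a a) :
    HasDirectedCycle E := by
  obtain ⟨n, f, hn, hf, h0, hn'⟩ := exists_walk_of_transGen h
  exact ⟨n, f, hn, hf, h0.trans hn'.symm⟩

lemma isPartialOrder_reflTransGen (h : ¬ HasDirectedCycle E) :
    IsPartialOrder V (Relation.ReflTransGen E) where
  refl _ := .refl
  trans _ _ _ := .trans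
  antisymm a b hab hba := by
    by_contra hne
    have hab' := (Relation.reflTransGen_iff_eq_or_transGen.mp hab).resolve_left (Ne.symm hne)
    exact h (hasDirectedCycle_of_transGen (hab'.trans_left hba))

lemma exists_isLinearOrder_of_not_hasDirectedCycle (h : ¬ HasDirectedCycle E) :
    ∃ s : V → V → Prop, IsLinearOrder V s ∧ ∀ a b, E a b → s a b ∧ a ≠ b := by
  have := isPartialOrder_reflTransGen h
  obtain ⟨s, hs, hle⟩ := extend_partialOrder (Relation.ReflTransGen E)
  refine ⟨s, hs, fun a b hab => ⟨hle _ _ (.single hab), ?_⟩⟩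
  rintro rfl
  exact h (hasDirectedCycle_of_transGen (.single hab))

end DirectedGraph

open Finset in
lemma card_strictSucc_lt_of_rel {V : Type*} [Fintype V] [DecidableEq V] {s : V → V → Prop}
    [DecidableRel s] [IsTrans V s] [Std.Antisymm s] {a b : V} (hab : s a b) (hne : a ≠ b) :
    #{c | s b c ∧ c ≠ b} < #{c | s a c ∧ c ≠ a} := by
  refine card_lt_card ((ssubset_iff_of_subset fun c hc => ?_).mpr ⟨b, ?_, ?_⟩)
  · simp only [mem_filter, mem_univ, true_and] at hc ⊢
    refine ⟨_root_.trans hab hc.1, ?_⟩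
    rintro rfl
    exact hc.2 (antisymm hc.1 hab).symm
  · simpa using ⟨hab, hne.symm⟩
  · simp

lemma exists_injective_rank_of_not_hasDirectedCycle {V : Type*} [Fintype V]
    {E : V → V → Prop} (h : ¬ HasDirectedCycle E) :
    ∃ ρ : V → ℕ, Function.Injective ρ ∧ (∀ a, ρ a < Fintype.card V) ∧
      ∀ a b, E a b → ρ b < ρ a := by
  classical
  obtain ⟨s, hs, hE⟩ := exists_isLinearOrder_of_not_hasDirectedCycle h
  have hlt {a b : V} (hab : s a b) (hne : a ≠ b) := card_strictSucc_lt_of_rel hab hne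
  refine ⟨fun a => Finset.card {c | s a c ∧ c ≠ a}, fun a b hρ => ?_,
    fun a => Finset.card_lt_univ_of_notMem (x := a) (by simp),
    fun a b hab => (hE a b hab).elim hlt⟩
  by_contra hne
  rcases total_of s a b with hab | hba
  · exact (hlt hab hne).ne hρ.symm
  · exact (hlt hba (Ne.symm hne)).ne hρ

section Rescaling

variable (a : ℝ) {ε : ℝ}

lemma strictMono_add_mul_succ_div (hε : 0 < ε) (N : ℕ) :
    StrictMono fun k : ℕ => a + ε * (k + 1) / (N + 1) := fun k l hkl => by
  have : (k : ℝ) < l := by exact_mod_cast hkl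
  beta_reduce
  gcongr

lemma add_mul_succ_div_mem_Ioo (hε : 0 < ε) {k N : ℕ} (hk : k < N) :
    a + ε * (k + 1) / (N + 1) ∈ Set.Ioo a (a + ε) := by
  have hkN : (k : ℝ) + 1 < N + 1 := by exact_mod_cast Nat.succ_lt_succ hk
  have : ε * (k + 1) / (N + 1) < ε := by
    rw [div_lt_iff₀ (by positivity)]; nlinarith
  exact ⟨lt_add_of_pos_right _ (by positivity), by linarith⟩

end Rescaling

theorem stmt_19 (m : ℕ) (B : Fin m → Fin m → Fin m → Prop)
    (hbet : IsBetweenness B)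
    (hacyc : ¬ HasDirectedCycle (fun u v : Sym2 (Fin m) =>
        ∃ i j k, B i j k ∧ u = s(i, j) ∧ v = s(i, k)))
    (ε : ℝ) (hε : 0 < ε) :
    ∃ β : Sym2 (Fin m) → ℝ,
      (∀ e f : Sym2 (Fin m), ¬ e.IsDiag → ¬ f.IsDiag → β e = β f → e = f) ∧
      (∀ e : Sym2 (Fin m), ¬ e.IsDiag → β e ∈ Set.Ioo (1 / 4 : ℝ) (1 / 4 + ε)) ∧
      ∀ i j k, B i j k → β s(i, j) > β s(i, k) ∧ β s(j, k) > β s(i, k) := by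
  obtain ⟨ρ, hρinj, hρlt, hρE⟩ := exists_injective_rank_of_not_hasDirectedCycle hacyc
  have hw := strictMono_add_mul_succ_div (1 / 4) hε (Fintype.card (Sym2 (Fin m)))
  refine ⟨fun e => 1 / 4 + ε * (ρ e + 1) / (Fintype.card (Sym2 (Fin m)) + 1),
    fun e f _ _ hef => hρinj (hw.injective hef),
    fun e _ => add_mul_succ_div_mem_Ioo (1 / 4) hε (hρlt e),
    fun i j k hijk => ⟨hw (hρE _ _ ⟨i, j, k, hijk, rfl, rfl⟩), ?_⟩⟩
  have hkji := hρE _ _ ⟨k, j, i, (hbet i j k hijk).2.1, rfl, rfl⟩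
  rw [Sym2.eq_swap (a := k) (b := j), Sym2.eq_swap (a := k) (b := i)] at hkji
  exact hw hkji
end
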